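/- In ℂ² ⊗ ℂ² with orthonormal basis |0⟩, |1⟩ of ℂ² and |±⟩ = (|0⟩ ± |1⟩)/√2, let ψ = ((|0⟩ + |1⟩)/√2) ⊗ |0⟩ and φ = (|0⟩⊗|0⟩ + |1⟩⊗|1⟩)/√2, and let P₁ = |1⟩⟨1|, P₊ = |+⟩⟨+|, P₋ = |−⟩⟨−|. Then ⟨φ, ψ⟩ ≠ 0 and the weak values satisfy w(P₁ ⊗ 1 | ψ,φ) = 0, w(P₁ ⊗ P₊ | ψ,φ) = 1/2, and w(P₁ ⊗ P₋ | ψ,φ) = −1/2; in particular w(P₁ ⊗ 1) = w(P₁ ⊗ P₊) + w(P₁ ⊗ P₋), and the value −1/2 is an anomalous weak value lying outside the eigenvalue range [0,1] of the projector P₁ ⊗ P₋. -/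

import Mathlib

open scoped InnerProductSpace

/-- Two-qubit Hilbert space `ℂ² ⊗ ℂ²`, realized as `EuclideanSpace ℂ (Fin 2 × Fin 2)`
with product basis `|i⟩ ⊗ |j⟩ = b i j`. -/
noncomputable def b (i j : Fin 2) : EuclideanSpace ℂ (Fin 2 × Fin 2) :=
  EuclideanSpace.single (i, j) 1

/-- The rank-one orthogonal projection onto the span of a unit vector `v`. -/
noncomputable def rankOneProj (v : EuclideanSpace ℂ (Fin 2 × Fin 2)) :
    EuclideanSpace ℂ (Fin 2 × Fin 2) →L[ℂ] EuclideanSpace ℂ (Fin 2 × Fin 2) :=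
  (innerSL ℂ v).smulRight v

/-- Pre-selection `ψ = ((|0⟩ + |1⟩)/√2) ⊗ |0⟩`. -/
noncomputable def ψ : EuclideanSpace ℂ (Fin 2 × Fin 2) :=
  ((Real.sqrt 2 : ℂ))⁻¹ • (b 0 0 + b 1 0)

/-- Post-selection `φ = (|0⟩⊗|0⟩ + |1⟩⊗|1⟩)/√2`. -/
noncomputable def φ : EuclideanSpace ℂ (Fin 2 × Fin 2) :=
  ((Real.sqrt 2 : ℂ))⁻¹ • (b 0 0 + b 1 1)

/-- `P₁ ⊗ 1 = |1,0⟩⟨1,0| + |1,1⟩⟨1,1|`. -/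
noncomputable def P1I : EuclideanSpace ℂ (Fin 2 × Fin 2) →L[ℂ] EuclideanSpace ℂ (Fin 2 × Fin 2) :=
  rankOneProj (b 1 0) + rankOneProj (b 1 1)

/-- `P₁ ⊗ P₊`, the projection onto `|1⟩ ⊗ |+⟩ = (|1,0⟩ + |1,1⟩)/√2`. -/
noncomputable def P1plus : EuclideanSpace ℂ (Fin 2 × Fin 2) →L[ℂ] EuclideanSpace ℂ (Fin 2 × Fin 2) :=
  rankOneProj (((Real.sqrt 2 : ℂ))⁻¹ • (b 1 0 + b 1 1))

/-- `P₁ ⊗ P₋`, the projection onto `|1⟩ ⊗ |−⟩ = (|1,0⟩ − |1,1⟩)/√2`. -/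
noncomputable def P1minus : EuclideanSpace ℂ (Fin 2 × Fin 2) →L[ℂ] EuclideanSpace ℂ (Fin 2 × Fin 2) :=
  rankOneProj (((Real.sqrt 2 : ℂ))⁻¹ • (b 1 0 - b 1 1))

/-- The weak value `w(A) = Re(⟪φ, A ψ⟫ / ⟪φ, ψ⟫)`. -/
noncomputable def w
    (A : EuclideanSpace ℂ (Fin 2 × Fin 2) →L[ℂ] EuclideanSpace ℂ (Fin 2 × Fin 2)) : ℝ :=
  (⟪φ, A ψ⟫_ℂ / ⟪φ, ψ⟫_ℂ).re

/-!
The weak value of a rank-one projector `|v⟩⟨v|` is `Re (⟪φ, v⟫ ⟪v, ψ⟫ / ⟪φ, ψ⟫)`, with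
`⟪φ, ψ⟫ = 1/2`. Both vectors `|1⟩ ⊗ |±⟩` overlap `ψ` by `1/2`, while `φ` overlaps them by `±1/2`,
so the two weak values are `±1/2`. For `P₁ ⊗ 1 = |1,0⟩⟨1,0| + |1,1⟩⟨1,1|` every product
`⟪φ, b 1 j⟫ ⟪b 1 j, ψ⟫` vanishes, since `φ` lives on the diagonal `i = j` and `ψ` on `j = 0`.
-/

open ComplexConjugate

lemma conj_inv_sqrt_two : conj ((Real.sqrt 2 : ℂ))⁻¹ = ((Real.sqrt 2 : ℂ))⁻¹ := by
  rw [map_inv₀, Complex.conj_ofReal]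

lemma inv_sqrt_two_mul_self : ((Real.sqrt 2 : ℂ))⁻¹ * ((Real.sqrt 2 : ℂ))⁻¹ = 1 / 2 := by
  rw [← mul_inv, ← Complex.ofReal_mul, Real.mul_self_sqrt zero_le_two]
  norm_num

lemma inner_b_b (i j k l : Fin 2) :
    ⟪b i j, b k l⟫_ℂ = if (k, l) = (i, j) then 1 else 0 := by
  simp only [b, EuclideanSpace.inner_single_left, PiLp.single_apply, map_one, one_mul,
    eq_comm]

lemma inner_b_ψ (i j : Fin 2) :
    ⟪b i j, ψ⟫_ℂ = if j = 0 then ((Real.sqrt 2 : ℂ))⁻¹ else 0 := by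
  fin_cases i <;> fin_cases j <;>
    simp only [ψ, inner_add_right, inner_smul_right, inner_b_b] <;>
      norm_num [Prod.ext_iff]

lemma inner_φ_b (i j : Fin 2) :
    ⟪φ, b i j⟫_ℂ = if i = j then ((Real.sqrt 2 : ℂ))⁻¹ else 0 := by
  fin_cases i <;> fin_cases j <;>
    simp only [φ, inner_add_left, inner_smul_left, inner_b_b, conj_inv_sqrt_two] <;>
      norm_num [Prod.ext_iff]

lemma inner_φ_ψ : ⟪φ, ψ⟫_ℂ = 1 / 2 := by
  simp only [ψ, inner_add_right, inner_smul_right, inner_φ_b]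
  norm_num [inv_sqrt_two_mul_self]

lemma inner_φ_plus : ⟪φ, ((Real.sqrt 2 : ℂ))⁻¹ • (b 1 0 + b 1 1)⟫_ℂ = 1 / 2 := by
  simp only [inner_add_right, inner_smul_right, inner_φ_b]
  norm_num [inv_sqrt_two_mul_self]

lemma inner_φ_minus : ⟪φ, ((Real.sqrt 2 : ℂ))⁻¹ • (b 1 0 - b 1 1)⟫_ℂ = -(1 / 2) := by
  simp only [inner_sub_right, inner_smul_right, inner_φ_b]
  norm_num [inv_sqrt_two_mul_self]

lemma inner_plus_ψ : ⟪((Real.sqrt 2 : ℂ))⁻¹ • (b 1 0 + b 1 1), ψ⟫_ℂ = 1 / 2 := by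
  simp only [inner_smul_left, inner_add_left, inner_b_ψ, conj_inv_sqrt_two]
  norm_num [inv_sqrt_two_mul_self]

lemma inner_minus_ψ : ⟪((Real.sqrt 2 : ℂ))⁻¹ • (b 1 0 - b 1 1), ψ⟫_ℂ = 1 / 2 := by
  simp only [inner_smul_left, inner_sub_left, inner_b_ψ, conj_inv_sqrt_two]
  norm_num [inv_sqrt_two_mul_self]

lemma w_add (A B : EuclideanSpace ℂ (Fin 2 × Fin 2) →L[ℂ] EuclideanSpace ℂ (Fin 2 × Fin 2)) :
    w (A + B) = w A + w B := by
  simp only [w, add_apply, inner_add_right, add_div, Complex.add_re]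

lemma w_rankOneProj (v : EuclideanSpace ℂ (Fin 2 × Fin 2)) :
    w (rankOneProj v) = (⟪φ, v⟫_ℂ * ⟪v, ψ⟫_ℂ / ⟪φ, ψ⟫_ℂ).re := by
  rw [w, rankOneProj, ContinuousLinearMap.smulRight_apply, innerSL_apply_apply, inner_smul_right,
    mul_comm]

lemma w_P1I : w P1I = 0 := by
  simp [P1I, w_add, w_rankOneProj, inner_φ_b, inner_b_ψ]

lemma w_P1plus : w P1plus = 1 / 2 := by
  rw [P1plus, w_rankOneProj, inner_φ_plus, inner_plus_ψ, inner_φ_ψ]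
  norm_num

lemma w_P1minus : w P1minus = -(1 / 2) := by
  rw [P1minus, w_rankOneProj, inner_φ_minus, inner_minus_ψ, inner_φ_ψ]
  norm_num

/-- The weak-measurement quantum cheshire cat: `⟪φ, ψ⟫ ≠ 0`,
`w(P₁ ⊗ 1) = 0`, `w(P₁ ⊗ P₊) = 1/2`, `w(P₁ ⊗ P₋) = -1/2`; in particular
`w(P₁ ⊗ 1) = w(P₁ ⊗ P₊) + w(P₁ ⊗ P₋)`, and `-1/2` is an anomalous weak value
lying outside the eigenvalue range `[0, 1]` of the projector `P₁ ⊗ P₋`. -/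
theorem cheshire_cat_weak_values :
    ⟪φ, ψ⟫_ℂ ≠ 0 ∧
    w P1I = 0 ∧ w P1plus = 1 / 2 ∧ w P1minus = -(1 / 2) ∧
    w P1I = w P1plus + w P1minus ∧
    ¬ (0 ≤ w P1minus ∧ w P1minus ≤ 1) := by
  refine ⟨by rw [inner_φ_ψ]; norm_num, w_P1I, w_P1plus, w_P1minus, ?_, ?_⟩
  · rw [w_P1I, w_P1plus, w_P1minus]
    ring
  · rw [w_P1minus]
    norm_num
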